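/- There exist a finite set 𝓕 ⊆ Γ/K × Γ/K and a map ω : 𝓕 → Γ/K such that: (i) a pair (g₀, g₁) ∈ Γ × Γ belongs to the image of ψ if and only if (π_K(g₀), π_K(g₁)) ∈ 𝓕; (ii) whenever (π_K(g₀), π_K(g₁)) ∈ 𝓕, every g ∈ St_Γ(1) with ψ(g) = (g₀, g₁) satisfies π_K(g) = ω(π_K(g₀), π_K(g₁)). -/

import Mathlib

set_option maxHeartbeats 1000000

attribute [local instance] Classical.propDecidable

noncomputable section

namespace Grig

/-! ### The Grigorchuk group -/

/-- The action of the generator `a` on vertices (finite binary words). -/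
def aFun : List Bool → List Bool
  | [] => []
  | x :: w => (!x) :: w

lemma aFun_invol : ∀ w, aFun (aFun w) = w := by
  intro w; cases w <;> simp [aFun]

/-- States of the automaton generating `b`, `c`, `d`. -/
inductive St | B | C | D

/-- The actions of `b`, `c`, `d` on vertices. -/
def stFun : St → List Bool → List Bool
  | _, [] => []
  | .B, false :: w => false :: aFun w
  | .B, true :: w => true :: stFun .C w
  | .C, false :: w => false :: aFun w
  | .C, true :: w => true :: stFun .D w
  | .D, false :: w => false :: w
  | .D, true :: w => true :: stFun .B w

lemma stFun_invol : ∀ (s : St) (w : List Bool), stFun s (stFun s w) = w := by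
  intro s w
  induction w generalizing s with
  | nil => cases s <;> rfl
  | cons x w ih => cases s <;> cases x <;> simp [stFun, aFun_invol, ih]

/-- The automorphism `a` of the binary rooted tree. -/
def a : Equiv.Perm (List Bool) := ⟨aFun, aFun, aFun_invol, aFun_invol⟩
/-- The automorphism `b`. -/
def b : Equiv.Perm (List Bool) := ⟨stFun .B, stFun .B, stFun_invol .B, stFun_invol .B⟩
/-- The automorphism `c`. -/
def c : Equiv.Perm (List Bool) := ⟨stFun .C, stFun .C, stFun_invol .C, stFun_invol .C⟩
/-- The automorphism `d`. -/
def d : Equiv.Perm (List Bool) := ⟨stFun .D, stFun .D, stFun_invol .D, stFun_invol .D⟩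

/-- The Grigorchuk group `Γ`, as the subgroup of the group of permutations of the
vertex set generated by the four automorphisms `a, b, c, d` (which indeed preserve word
length and initial segments, so `Γ` is a subgroup of `Aut(T)`). -/
def Grigorchuk : Subgroup (Equiv.Perm (List Bool)) := Subgroup.closure {a, b, c, d}

/-- `a` as an element of `Γ`. -/
def ga : Grigorchuk := ⟨a, Subgroup.subset_closure (by simp)⟩
/-- `b` as an element of `Γ`. -/
def gb : Grigorchuk := ⟨b, Subgroup.subset_closure (by simp)⟩
/-- `c` as an element of `Γ`. -/
def gc : Grigorchuk := ⟨c, Subgroup.subset_closure (by simp)⟩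
/-- `d` as an element of `Γ`. -/
def gd : Grigorchuk := ⟨d, Subgroup.subset_closure (by simp)⟩

/-- The first level stabilizer `St_Γ(1)` of `Γ`. -/
def St1 : Subgroup Grigorchuk where
  carrier := {g | (g : Equiv.Perm (List Bool)) [false] = [false] ∧
                  (g : Equiv.Perm (List Bool)) [true] = [true]}
  one_mem' := ⟨rfl, rfl⟩
  mul_mem' := by
    rintro g h ⟨hg1, hg2⟩ ⟨hh1, hh2⟩
    refine ⟨?_, ?_⟩ <;>
      simp only [Subgroup.coe_mul, Equiv.Perm.mul_apply, hh1, hh2, hg1, hg2]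
  inv_mem' := by
    rintro g ⟨hg1, hg2⟩
    refine ⟨?_, ?_⟩
    · conv_lhs => rw [← hg1]
      simp
    · conv_lhs => rw [← hg2]
      simp

/-- The subgroup `K`, the normal closure of `abab` in `Γ`. -/
def K : Subgroup Grigorchuk := Subgroup.normalClosure {ga * gb * ga * gb}

instance : K.Normal := Subgroup.normalClosure_normal

/-- The canonical projection `π_K : Γ → Γ/K`. -/
def piK : Grigorchuk →* Grigorchuk ⧸ K := QuotientGroup.mk' K

/-- `ψ_i(g)` (`i ∈ {0,1}`, encoded by `false`/`true`): the automorphism determined by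
`g(i·w) = i·ψ_i(g)(w)`, when it exists in `Γ` (it does for `g ∈ St_Γ(1)`);
junk value `1` otherwise. -/
def psiG (i : Bool) (g : Grigorchuk) : Grigorchuk :=
  if h : ∃ k : Grigorchuk, ∀ w : List Bool,
      (g : Equiv.Perm (List Bool)) (i :: w) = i :: (k : Equiv.Perm (List Bool)) w
  then h.choose else 1

/-- `ū`: the closest element of `St_Γ(1)`. -/
def bar (g : Grigorchuk) : Grigorchuk := if g ∈ St1 then g else g * ga

/-- The word length of `g ∈ Γ` with respect to the generating set `{a,b,c,d}`
(each generator is an involution, so inverses of generators are not needed). -/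
def wlen (g : Grigorchuk) : ℕ :=
  sInf {n | ∃ l : List Grigorchuk, l.length = n ∧
    (∀ x ∈ l, x ∈ ({ga, gb, gc, gd} : Set Grigorchuk)) ∧ l.prod = g}



/-! ### Words and equations over a group -/

/-- A letter: a constant from `G`, or a variable `x ∈ ℕ` with a sign
(`true` for `x`, `false` for `x⁻¹`). -/
abbrev Letter (G : Type*) := G ⊕ (ℕ × Bool)

/-- A word over `G` with variables: `W = u₁u₂⋯u_k`, `u_i ∈ G ∪ X^{±1}`. -/
abbrev Word (G : Type*) := List (Letter G)

variable {G : Type*} [Group G]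

/-- The constant letter. -/
def Cst (g : G) : Letter G := Sum.inl g
/-- The letter `x`. -/
def Vp {G : Type*} (x : ℕ) : Letter G := Sum.inr (x, true)
/-- The letter `x⁻¹`. -/
def Vm {G : Type*} (x : ℕ) : Letter G := Sum.inr (x, false)

/-- The element of the free product `G ∗ F_X` represented by a word. -/
def wordProd (W : Word G) : Monoid.Coprod G (FreeGroup ℕ) :=
  (W.map (fun u => match u with
    | Sum.inl g => Monoid.Coprod.inl g
    | Sum.inr (x, e) =>
        Monoid.Coprod.inr (if e then FreeGroup.of x else (FreeGroup.of x)⁻¹))).prod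

/-- Number of occurrences of the letter `x^ε` (`ε` given by `e`) in `W`. -/
def occ (W : Word G) (x : ℕ) (e : Bool) : ℕ :=
  W.countP (fun u => match u with
    | Sum.inr (y, f) => y == x && f == e
    | _ => false)

/-- Total number of occurrences of the variable `x` in `W` (occurrences of both
`x` and `x⁻¹` are counted). -/
def nocc (W : Word G) (x : ℕ) : ℕ := occ W x true + occ W x false

/-- `Var(W)`: the set of variables occurring in `W`. -/
def Vars (W : Word G) : Set ℕ := {x | nocc W x ≠ 0}

/-- A word is quadratic if every variable occurring in it occurs exactly twice. -/
def IsQuadratic (W : Word G) : Prop := ∀ x ∈ Vars W, nocc W x = 2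

/-- A word is orientable if every variable occurring in it occurs exactly once with
exponent `+1` and once with exponent `-1`. -/
def Orientable (W : Word G) : Prop := ∀ x ∈ Vars W, occ W x true = 1 ∧ occ W x false = 1

/-- Formal inverse of a word. -/
def wordInv (W : Word G) : Word G :=
  (W.map (fun u => match u with
    | Sum.inl g => Sum.inl g⁻¹
    | Sum.inr (x, e) => (Sum.inr (x, !e) : Letter G))).reverse

/-- The commutator word `[x,y] = x⁻¹y⁻¹xy`. -/
def comm {G : Type*} (x y : ℕ) : Word G := [Vm x, Vm y, Vp x, Vp y]
/-- The square word `x² = x·x`. -/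
def sq {G : Type*} (x : ℕ) : Word G := [Vp x, Vp x]
/-- The coefficient factor `z⁻¹cz`. -/
def cf (z : ℕ) (c : G) : Word G := [Vm z, Cst c, Vp z]

/-- Concatenation of a list of words. -/
def listJoin {α : Type*} (l : List (List α)) : List α := l.foldr (· ++ ·) []

/-- The commutator part `[x₁,y₁]⋯[x_g,y_g]`. -/
def commPart {G : Type*} (g : ℕ) (xs ys : Fin g → ℕ) : Word G :=
  listJoin (List.ofFn fun i => comm (xs i) (ys i))
/-- The square part `x₁²⋯x_g²`. -/
def sqPart {G : Type*} (g : ℕ) (xs : Fin g → ℕ) : Word G :=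
  listJoin (List.ofFn fun i => sq (xs i))
/-- The coefficient part `z₁⁻¹c₁z₁⋯z_m⁻¹c_mz_m`. -/
def coefPart (m : ℕ) (zs : Fin m → ℕ) (cs : Fin m → G) : Word G :=
  listJoin (List.ofFn fun i => cf (zs i) (cs i))

/-- The standard orientable quadratic word
`[x₁,y₁]⋯[x_g,y_g]·z₁⁻¹c₁z₁⋯z_m⁻¹c_mz_m`. -/
def stdOr (g m : ℕ) (xs ys : Fin g → ℕ) (zs : Fin m → ℕ) (cs : Fin m → G) : Word G :=
  commPart g xs ys ++ coefPart m zs cs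

/-- The standard non-orientable quadratic word
`x₁²⋯x_g²·z₁⁻¹c₁z₁⋯z_m⁻¹c_mz_m`. -/
def stdNonOr (g m : ℕ) (xs : Fin g → ℕ) (zs : Fin m → ℕ) (cs : Fin m → G) : Word G :=
  sqPart g xs ++ coefPart m zs cs

/-- The variables `x₁,…,x_g,y₁,…,y_g,z₁,…,z_m` are pairwise distinct. -/
def DistinctVars (g m : ℕ) (xs ys : Fin g → ℕ) (zs : Fin m → ℕ) : Prop :=
  Function.Injective (fun p : (Fin g ⊕ Fin g) ⊕ Fin m =>
    match p with
    | Sum.inl (Sum.inl i) => xs i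
    | Sum.inl (Sum.inr i) => ys i
    | Sum.inr i => zs i)

/-- The variables `x₁,…,x_g,z₁,…,z_m` are pairwise distinct. -/
def DistinctVarsN (g m : ℕ) (xs : Fin g → ℕ) (zs : Fin m → ℕ) : Prop :=
  Function.Injective (fun p : Fin g ⊕ Fin m =>
    match p with
    | Sum.inl i => xs i
    | Sum.inr i => zs i)

/-- `α : G ∗ F_X → G` is a `G`-homomorphism (identical on `G`). -/
def IsGHom (α : Monoid.Coprod G (FreeGroup ℕ) →* G) : Prop :=
  ∀ g : G, α (Monoid.Coprod.inl g) = g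

/-- The value of a homomorphism at a variable. -/
def xval (α : Monoid.Coprod G (FreeGroup ℕ) →* G) (x : ℕ) : G :=
  α (Monoid.Coprod.inr (FreeGroup.of x))

/-- The equation `W = 1` has a solution in `G`. -/
def Solvable (W : Word G) : Prop :=
  ∃ α : Monoid.Coprod G (FreeGroup ℕ) →* G, IsGHom α ∧ α (wordProd W) = 1

/-- The system of equations `{W = 1 | W ∈ Ws}` with constraint `γ` modulo `H`
has a solution in `G`. -/
def SolvableC (H : Subgroup G) [H.Normal] (Ws : List (Word G)) (γ : ℕ → G ⧸ H) : Prop :=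
  ∃ α : Monoid.Coprod G (FreeGroup ℕ) →* G, IsGHom α ∧
    (∀ W ∈ Ws, α (wordProd W) = 1) ∧
    ∀ x : ℕ, (∃ W ∈ Ws, x ∈ Vars W) → (QuotientGroup.mk' H) (xval α x) = γ x

/-- A finitely supported `G`-automorphism of `G ∗ F_X`. -/
def IsFinGAut (φ : Monoid.Coprod G (FreeGroup ℕ) ≃* Monoid.Coprod G (FreeGroup ℕ)) : Prop :=
  (∀ g : G, φ (Monoid.Coprod.inl g) = Monoid.Coprod.inl g) ∧
  {x : ℕ | φ (Monoid.Coprod.inr (FreeGroup.of x)) ≠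
      Monoid.Coprod.inr (FreeGroup.of x)}.Finite

/-- Two words are equivalent if some finitely supported `G`-automorphism sends (the
element of `G ∗ F_X` represented by) the first to a conjugate of the second. -/
def EquivWords (Wa Wb : Word G) : Prop :=
  ∃ φ : Monoid.Coprod G (FreeGroup ℕ) ≃* Monoid.Coprod G (FreeGroup ℕ),
    IsFinGAut φ ∧ IsConj (φ (wordProd Wa)) (wordProd Wb)

/-- The homomorphism `G ∗ F_X → G/H` extending a constraint `γ` (equal to `π_H` on `G`
and to `γ` on the variables). -/
def constraintHom (H : Subgroup G) [H.Normal] (γ : ℕ → G ⧸ H) :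
    Monoid.Coprod G (FreeGroup ℕ) →* G ⧸ H :=
  Monoid.Coprod.lift (QuotientGroup.mk' H) (FreeGroup.lift γ)

/-- Equivalence of constrained equations `(Wa = 1, γ)` and `(Wb = 1, ζ)`. -/
def EquivWordsC (H : Subgroup G) [H.Normal] (Wa : Word G) (γ : ℕ → G ⧸ H)
    (Wb : Word G) (ζ : ℕ → G ⧸ H) : Prop :=
  ∃ φ : Monoid.Coprod G (FreeGroup ℕ) ≃* Monoid.Coprod G (FreeGroup ℕ),
    IsFinGAut φ ∧ IsConj (φ (wordProd Wa)) (wordProd Wb) ∧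
    constraintHom H ζ = (constraintHom H γ).comp φ.toMonoidHom

/-- `W₁ #ₓ W₂`, for `W₁ = U₁ x^{ε₁} V₁` and `W₂ = U₂ x^{ε₂} V₂`:
the word `U₁ (V₂U₂)^{-ε₁ε₂} V₁`. -/
def joinAt (U₁ V₁ U₂ V₂ : Word G) (e₁ e₂ : Bool) : Word G :=
  U₁ ++ (if e₁ = e₂ then wordInv (V₂ ++ U₂) else V₂ ++ U₂) ++ V₁



/-! ### The splitting map `Ψ` for words over `Γ` -/

/-- The image `St_Γ(1)/K` in `Γ/K` (well defined since `K ⊆ St_Γ(1)`). -/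
def StQ : Subgroup (Grigorchuk ⧸ K) := St1.map (QuotientGroup.mk' K)

/-- The coset modulo `St_Γ(1)` of a letter, under the constraint `γ`
(`false` = trivial coset, `true` = nontrivial coset). -/
def letterBit (γ : ℕ → Grigorchuk ⧸ K) : Letter Grigorchuk → Bool
  | Sum.inl g => if g ∈ St1 then false else true
  | Sum.inr (x, _) => if γ x ∈ StQ then false else true

/-- `σ_γ(W)`: the coset modulo `St_Γ(1)` of a word, under the constraint `γ`
(`false` = trivial coset `1`). -/
def sigmaW (γ : ℕ → Grigorchuk ⧸ K) : Word Grigorchuk → Bool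
  | [] => false
  | u :: W => xor (letterBit γ u) (sigmaW γ W)

variable (d0 d1 : ℕ → ℕ)

/-- The descendant `x_j` of the variable `x` (given the two fixed injections). -/
def dsc (j : Bool) (x : ℕ) : ℕ := if j then d1 x else d0 x

/-- The letter of `Ψ_i(W)` replacing a letter of `W`, where `s` is the coset
`σ_γ(u₁⋯u_{i-1})` of the preceding prefix. -/
def psiLetter (γ : ℕ → Grigorchuk ⧸ K) (i : Bool) (s : Bool) :
    Letter Grigorchuk → Letter Grigorchuk
  | Sum.inl g => Sum.inl (if s then psiG i (ga * bar g * ga) else psiG i (bar g))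
  | Sum.inr (x, true) => Sum.inr (dsc d0 d1 (xor i s) x, true)
  | Sum.inr (x, false) =>
      Sum.inr (dsc d0 d1 (xor i (xor s (letterBit γ (Sum.inr (x, false))))) x, false)

/-- Auxiliary recursion for `Ψ_i`, carrying the coset of the processed prefix. -/
def psiGo (γ : ℕ → Grigorchuk ⧸ K) (i : Bool) : Bool → Word Grigorchuk → Word Grigorchuk
  | _, [] => []
  | s, u :: W => psiLetter d0 d1 γ i s u :: psiGo γ i (xor s (letterBit γ u)) W

/-- The splitting `Ψ_i(W)` of a word `W` with respect to the constraint `γ`. -/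
def PsiW (γ : ℕ → Grigorchuk ⧸ K) (i : Bool) (W : Word Grigorchuk) : Word Grigorchuk :=
  psiGo d0 d1 γ i false W

/-- `q̄` for `q ∈ Γ/K`: the closest element of `St_Γ(1)/K`. -/
def barQ (q : Grigorchuk ⧸ K) : Grigorchuk ⧸ K :=
  if q ∈ StQ then q else q * (QuotientGroup.mk' K ga)


end Grig

/-!
`Γ/K` is finite: it is generated by the images of `a, b, d`, where `b` is central of order 2
and `⟨a, d⟩` is dihedral of order 8. The key inclusion is `K × K ≤ ψ(K ∩ St_Γ(1))`: it holds
because `ψ((abab)⁻¹ · (ada)⁻¹ abab (ada)) = (abab, 1)`, the first coordinate of `ψ` maps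
`St_Γ(1)` onto `Γ`, and conjugation by `a` swaps the two coordinates. Hence the image of `ψ` is
a union of cosets of `K × K`, which gives (i) with `𝓕` the image of `St_Γ(1)` in `Γ/K × Γ/K`,
and, `ψ` being injective, `ψ(g) ∈ K × K` forces `g ∈ K`, which gives (ii).
-/

open scoped Pointwise

section Generic

variable {G S P Q R : Type*} [Group G] [Group S] [Group P] [Group Q] [Group R]

theorem commute_of_mul_self_eq_one {x y : G} (hx : x * x = 1) (hy : y * y = 1)
    (hxy : x * y * (x * y) = 1) : Commute x y := by
  have h := eq_inv_of_mul_eq_one_left hxy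
  rwa [mul_inv_rev, inv_eq_of_mul_eq_one_right hx, inv_eq_of_mul_eq_one_right hy] at h

theorem Subgroup.finite_closure_of_commute {a b d : G} (ha : a * a = 1) (hd : d * d = 1)
    (had : IsOfFinOrder (a * d)) (hb : IsOfFinOrder b) (hab : Commute a b)
    (hbd : Commute b d) : (closure {a, b, d} : Set G).Finite := by
  set F : Set G := {x | ∃ m n : ℤ, x = b ^ m * (a * d) ^ n ∨ x = b ^ m * (a * d) ^ n * a}
  have ha' : a⁻¹ = a := inv_eq_of_mul_eq_one_right ha
  have hd' : d⁻¹ = d := inv_eq_of_mul_eq_one_right hd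
  have hbF : Commute b (a * d) := hab.symm.mul_right hbd
  have hmul_b : ∀ x ∈ F, ∀ k : ℤ, x * b ^ k ∈ F := by
    rintro x ⟨m, n, rfl | rfl⟩ k <;> refine ⟨m + k, n, ?_⟩
    · left
      simp only [zpow_add, mul_assoc]
      rw [(hbF.zpow_zpow k n).eq]
    · right
      simp only [zpow_add, mul_assoc]
      rw [(hab.zpow_right k).eq, ← mul_assoc ((a * d) ^ n), ← (hbF.zpow_zpow k n).eq,
        mul_assoc]
  have hmul_a : ∀ x ∈ F, x * a ∈ F := by
    rintro x ⟨m, n, rfl | rfl⟩ <;> refine ⟨m, n, ?_⟩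
    · exact Or.inr rfl
    · left; rw [mul_assoc, ha, mul_one]
  have hmul_d : ∀ x ∈ F, x * d ∈ F := by
    rintro x ⟨m, n, rfl | rfl⟩
    · refine ⟨m, n - 1, Or.inr ?_⟩
      rw [zpow_sub_one, mul_inv_rev, ha', hd']
      simp only [mul_assoc, ha, mul_one]
    · refine ⟨m, n + 1, Or.inl ?_⟩
      rw [zpow_add_one]
      simp only [mul_assoc]
  have hF : (closure {a, b, d} : Set G) ⊆ F := by
    intro x hx
    induction hx using closure_induction_right with
    | one => exact ⟨0, 0, Or.inl (by simp)⟩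
    | mul_right x _ y hy hx =>
      rcases hy with rfl | rfl | rfl
      exacts [hmul_a x hx, by simpa using hmul_b x hx 1, hmul_d x hx]
    | mul_inv_cancel x _ y hy hx =>
      rcases hy with rfl | rfl | rfl
      exacts [by rw [ha']; exact hmul_a x hx, by simpa using hmul_b x hx (-1),
        by rw [hd']; exact hmul_d x hx]
  refine ((finite_zpowers.2 hb).mul (finite_zpowers.2 had)).mul
    (Set.toFinite {1, a}) |>.subset (hF.trans ?_)
  rintro x ⟨m, n, rfl | rfl⟩
  · exact ⟨_, Set.mul_mem_mul (zpow_mem_zpowers b m) (zpow_mem_zpowers _ n), 1, by simp,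
      mul_one _⟩
  · exact Set.mul_mem_mul (Set.mul_mem_mul (zpow_mem_zpowers b m) (zpow_mem_zpowers _ n))
      (by simp)

theorem MonoidHom.mem_range_iff_of_ker_le_range {f : S →* P} {q : P →* Q} (h : q.ker ≤ f.range)
    {p : P} :
    p ∈ f.range ↔ q p ∈ (q.comp f).range := by
  refine ⟨fun ⟨s, hs⟩ => ⟨s, by simp [hs]⟩, fun ⟨s, hs⟩ => ?_⟩
  obtain ⟨t, ht⟩ := h (show (f s)⁻¹ * p ∈ q.ker by simp_all [MonoidHom.mem_ker])
  exact ⟨s * t, by rw [map_mul, ht, mul_inv_cancel_left]⟩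

theorem MonoidHom.ker_comp_le_of_injective {f : S →* P} (hf : Function.Injective f)
    {q : P →* Q} {r : S →* R} (h : q.ker ≤ r.ker.map f) : (q.comp f).ker ≤ r.ker := by
  intro s hs
  obtain ⟨t, ht, hts⟩ := h hs
  rwa [← hf hts]

end Generic

namespace Grig

lemma apply_nil (g : Grigorchuk) : (g : Equiv.Perm (List Bool)) [] = [] := by
  have h : Grigorchuk ≤ MulAction.stabilizer (Equiv.Perm (List Bool)) ([] : List Bool) :=
    (Subgroup.closure_le _).2 (by rintro _ (rfl | rfl | rfl | rfl) <;> rfl)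
  exact MulAction.mem_stabilizer_iff.1 (h g.2)

lemma ga_mul_self : ga * ga = 1 := Subtype.ext (Equiv.ext aFun_invol)
lemma gb_mul_self : gb * gb = 1 := Subtype.ext (Equiv.ext (stFun_invol .B))
lemma gc_mul_self : gc * gc = 1 := Subtype.ext (Equiv.ext (stFun_invol .C))
lemma gd_mul_self : gd * gd = 1 := Subtype.ext (Equiv.ext (stFun_invol .D))

lemma stFun_comp_cycle (w : List Bool) :
    stFun .B (stFun .D w) = stFun .C w ∧ stFun .C (stFun .B w) = stFun .D w ∧
      stFun .D (stFun .C w) = stFun .B w := by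
  induction w with
  | nil => exact ⟨rfl, rfl, rfl⟩
  | cons x w ih => cases x <;> simp [stFun, aFun_invol, ih]

lemma gb_mul_gd : gb * gd = gc := Subtype.ext (Equiv.ext fun w => (stFun_comp_cycle w).1)

lemma closure_ga_gb_gd : Subgroup.closure ({ga, gb, gd} : Set Grigorchuk) = ⊤ := by
  have hgc : gc ∈ Subgroup.closure ({ga, gb, gd} : Set Grigorchuk) := gb_mul_gd ▸
    mul_mem (Subgroup.subset_closure (by simp)) (Subgroup.subset_closure (by simp))
  have h : Subgroup.closure (((↑) : Grigorchuk → Equiv.Perm (List Bool)) ⁻¹' {a, b, c, d}) = ⊤ :=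
    Subgroup.closure_closure_coe_preimage
  rw [eq_top_iff, ← h, Subgroup.closure_le]
  rintro ⟨g, hg⟩ (rfl | rfl | rfl | rfl : g = a ∨ g = b ∨ g = c ∨ g = d)
  · exact Subgroup.subset_closure (Or.inl rfl)
  · exact Subgroup.subset_closure (Or.inr (Or.inl rfl))
  · exact hgc
  · exact Subgroup.subset_closure (Or.inr (Or.inr rfl))

lemma ga_mul_gd_pow_four : (ga * gd) ^ 4 = 1 := by
  refine Subtype.ext (Equiv.ext ?_)
  rintro (_ | ⟨_ | _, w⟩)
  · rfl
  · exact congrArg (false :: ·) (stFun_invol .B w)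
  · exact congrArg (true :: ·) (stFun_invol .B w)

lemma exists_sections (g : Grigorchuk) : ∃ (s : Bool) (k : Bool → Grigorchuk),
    ∀ x w, (g : Equiv.Perm (List Bool)) (x :: w) = xor x s :: (k x : Equiv.Perm (List Bool)) w := by
  have hg : g ∈ Subgroup.closure {ga, gb, gd} := closure_ga_gb_gd ▸ Subgroup.mem_top g
  induction hg using Subgroup.closure_induction with
  | mem g hg =>
    rcases hg with rfl | rfl | rfl
    · exact ⟨true, 1, by rintro (_ | _) w <;> rfl⟩
    · exact ⟨false, fun x => bif x then gc else ga, by rintro (_ | _) w <;> rfl⟩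
    · exact ⟨false, fun x => bif x then gb else 1, by rintro (_ | _) w <;> rfl⟩
  | one => exact ⟨false, 1, by rintro (_ | _) w <;> rfl⟩
  | mul g h _ _ hg hh =>
    obtain ⟨s, k, hk⟩ := hg
    obtain ⟨t, l, hl⟩ := hh
    refine ⟨xor t s, fun x => k (xor x t) * l x, fun x w => ?_⟩
    simp [hk, hl]
  | inv g _ hg =>
    obtain ⟨s, k, hk⟩ := hg
    refine ⟨s, fun x => (k (xor x s))⁻¹, fun x w => ?_⟩
    rw [Subgroup.coe_inv, Equiv.Perm.inv_eq_iff_eq, hk]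
    simp

lemma apply_singleton (g : Grigorchuk) :
    ∃ s, ∀ x, (g : Equiv.Perm (List Bool)) [x] = [xor x s] := by
  obtain ⟨s, k, hk⟩ := exists_sections g
  exact ⟨s, fun x => by rw [hk, apply_nil]⟩

lemma mem_St1_iff {g : Grigorchuk} : g ∈ St1 ↔ ∀ x, (g : Equiv.Perm (List Bool)) [x] = [x] :=
  ⟨fun h x => by cases x; exacts [h.1, h.2], fun h => ⟨h false, h true⟩⟩

instance : St1.Normal where
  conj_mem n hn g := by
    obtain ⟨s, hs⟩ := apply_singleton g
    have hinv : ∀ x, ((g⁻¹ : Grigorchuk) : Equiv.Perm (List Bool)) [x] = [xor x s] := by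
      intro x
      rw [Subgroup.coe_inv, Equiv.Perm.inv_eq_iff_eq, hs, Bool.xor_assoc, Bool.xor_self,
        Bool.xor_false]
    refine mem_St1_iff.2 fun x => ?_
    rw [Subgroup.coe_mul, Subgroup.coe_mul, Equiv.Perm.mul_apply, Equiv.Perm.mul_apply, hinv,
      mem_St1_iff.1 hn, hs, Bool.xor_assoc, Bool.xor_self, Bool.xor_false]

def IsSection (i : Bool) (g k : Grigorchuk) : Prop :=
  ∀ w, (g : Equiv.Perm (List Bool)) (i :: w) = i :: (k : Equiv.Perm (List Bool)) w

lemma psiG_eq_of_isSection {i : Bool} {g k : Grigorchuk} (h : IsSection i g k) :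
    psiG i g = k := by
  have hex : ∃ k' : Grigorchuk, ∀ w,
      (g : Equiv.Perm (List Bool)) (i :: w) = i :: (k' : Equiv.Perm (List Bool)) w := ⟨k, h⟩
  rw [psiG, dif_pos hex]
  refine Subtype.ext (Equiv.ext fun w => ?_)
  simpa using (hex.choose_spec w).symm.trans (h w)

lemma isSection_psiG {g : Grigorchuk} (hg : g ∈ St1) (i : Bool) : IsSection i g (psiG i g) := by
  obtain ⟨s, k, hk⟩ := exists_sections g
  obtain rfl : s = false := by simpa [hk, apply_nil] using hg.1
  have hi : IsSection i g (k i) := fun w => by rw [hk, Bool.xor_false]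
  rwa [psiG_eq_of_isSection hi]

lemma psiG_mul {g h : Grigorchuk} (hg : g ∈ St1) (hh : h ∈ St1) (i : Bool) :
    psiG i (g * h) = psiG i g * psiG i h :=
  psiG_eq_of_isSection fun w => by
    simp only [Subgroup.coe_mul, Equiv.Perm.mul_apply, isSection_psiG hh i w, isSection_psiG hg i _]

def psi : St1 →* Grigorchuk × Grigorchuk where
  toFun g := (psiG false g, psiG true g)
  map_one' := Prod.ext (psiG_eq_of_isSection fun _ => rfl) (psiG_eq_of_isSection fun _ => rfl)
  map_mul' g h := Prod.ext (psiG_mul g.2 h.2 false) (psiG_mul g.2 h.2 true)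

lemma psi_apply (g : St1) : psi g = (psiG false g, psiG true g) := rfl

lemma psi_injective : Function.Injective psi := by
  refine (injective_iff_map_eq_one psi).2 fun g hg => Subtype.ext (Subtype.ext (Equiv.ext ?_))
  have hg' : ∀ i, psiG i g = 1 := by rintro (_ | _) <;> simp_all [psi_apply, Prod.ext_iff]
  rintro (_ | ⟨i, w⟩)
  · exact apply_nil g
  · simpa [hg'] using isSection_psiG g.2 i w

lemma psiG_conj_ga {g : Grigorchuk} (hg : g ∈ St1) (i : Bool) :
    psiG i (ga * g * ga⁻¹) = psiG (!i) g :=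
  psiG_eq_of_isSection fun w => by
    show aFun ((g : Equiv.Perm (List Bool)) (aFun (i :: w))) = _
    simp [aFun, isSection_psiG hg (!i) w]

lemma psi_conjNormal_ga (g : St1) : psi (MulAut.conjNormal ga g) = (psi g).swap := by
  simp only [psi_apply, MulAut.conjNormal_apply, psiG_conj_ga g.2, Bool.not_false,
    Bool.not_true, Prod.swap_prod_mk]

lemma surjective_fst_psi : Function.Surjective fun g : St1 => (psi g).1 := by
  refine MonoidHom.range_eq_top.1
    (eq_top_iff.2 ?_ : ((MonoidHom.fst _ _).comp psi).range = ⊤)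
  rw [← closure_ga_gb_gd, Subgroup.closure_le]
  rintro _ (rfl | rfl | rfl)
  · exact ⟨⟨gb, rfl, rfl⟩, psiG_eq_of_isSection fun _ => rfl⟩
  · exact ⟨⟨ga * gd * ga⁻¹, rfl, rfl⟩, psiG_eq_of_isSection fun _ => rfl⟩
  · exact ⟨⟨ga * gc * ga⁻¹, rfl, rfl⟩, psiG_eq_of_isSection fun _ => rfl⟩

lemma abab_mem_K : ga * gb * ga * gb ∈ K := Subgroup.subset_normalClosure rfl

lemma gc_mul_gb_mul_gc : gc * gb * gc = gb := by
  rw [← gb_mul_gd, mul_assoc gb gd gb, mul_assoc, mul_assoc, ← mul_assoc gb gb, gb_mul_self,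
    one_mul, gd_mul_self, mul_one]

lemma inl_abab_mem_map_psi : (ga * gb * ga * gb, 1) ∈ (K.subgroupOf St1).map psi := by
  let t : St1 := ⟨ga * gb * ga * gb, rfl, rfl⟩
  let v : St1 := ⟨ga * gd * ga⁻¹, rfl, rfl⟩
  have ht : psi t = (gc * ga, ga * gc) :=
    Prod.ext (psiG_eq_of_isSection fun _ => rfl) (psiG_eq_of_isSection fun _ => rfl)
  have hv : psi v = (gb, 1) :=
    Prod.ext (psiG_eq_of_isSection fun _ => rfl) (psiG_eq_of_isSection fun _ => rfl)
  have htK : t ∈ K.subgroupOf St1 := abab_mem_K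
  refine ⟨t⁻¹ * (v⁻¹ * t * v), mul_mem (inv_mem htK)
    (by simpa using Subgroup.normal_subgroupOf.conj_mem _ htK v⁻¹), ?_⟩
  rw [map_mul, map_mul, map_mul, map_inv, map_inv, ht, hv]
  refine Prod.ext ?_ (by simp)
  simp only [Prod.fst_mul, Prod.fst_inv, mul_inv_rev, inv_eq_of_mul_eq_one_right ga_mul_self,
    inv_eq_of_mul_eq_one_right gb_mul_self, inv_eq_of_mul_eq_one_right gc_mul_self]
  simp only [mul_assoc]
  rw [← mul_assoc gc, ← mul_assoc (gc * gb), gc_mul_gb_mul_gc]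

lemma inl_mem_map_psi {k : Grigorchuk} (hk : k ∈ K) : (k, 1) ∈ (K.subgroupOf St1).map psi := by
  -- `L` is normal in all of `Γ` because `ψ₀` maps `St_Γ(1)` onto `Γ`
  let L := ((K.subgroupOf St1).map psi).comap (MonoidHom.inl Grigorchuk Grigorchuk)
  have : L.Normal := ⟨fun k hk c => by
    obtain ⟨u, huK, hu⟩ := hk
    obtain ⟨h, rfl⟩ := surjective_fst_psi c
    refine ⟨h * u * h⁻¹, Subgroup.normal_subgroupOf.conj_mem _ huK h, ?_⟩
    simp [hu, Prod.ext_iff]⟩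
  exact Subgroup.normalClosure_le_normal (N := L)
    (Set.singleton_subset_iff.2 inl_abab_mem_map_psi) hk

lemma prod_K_le_map_psi : K.prod K ≤ (K.subgroupOf St1).map psi := by
  rintro ⟨k₀, k₁⟩ ⟨hk₀, hk₁⟩
  obtain ⟨u, huK, hu⟩ := inl_mem_map_psi hk₁
  have hswap : (1, k₁) ∈ (K.subgroupOf St1).map psi :=
    ⟨MulAut.conjNormal ga u, Subgroup.normalClosure_normal.conj_mem _ huK ga,
      by rw [psi_conjNormal_ga, hu]; rfl⟩
  simpa using mul_mem (inl_mem_map_psi hk₀) hswap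

instance : Finite (Grigorchuk ⧸ K) := by
  set π := QuotientGroup.mk' K
  have hπ : ∀ {x y : Grigorchuk}, x * y = 1 → π x * π y = 1 := fun h => by
    rw [← map_mul, h, map_one]
  have hbd : Commute gb gd := commute_of_mul_self_eq_one gb_mul_self gd_mul_self
    (by rw [gb_mul_gd, gc_mul_self])
  have hab : Commute (π ga) (π gb) := commute_of_mul_self_eq_one (hπ ga_mul_self)
    (hπ gb_mul_self) (by
      rw [← map_mul, ← map_mul, ← mul_assoc]
      exact (QuotientGroup.eq_one_iff _).2 abab_mem_K)
  have hfin := Subgroup.finite_closure_of_commute (hπ ga_mul_self) (hπ gd_mul_self)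
    (isOfFinOrder_iff_pow_eq_one.2 ⟨4, by norm_num, by rw [← map_mul, ← map_pow,
      ga_mul_gd_pow_four, map_one]⟩)
    (isOfFinOrder_iff_pow_eq_one.2 ⟨2, two_pos, by rw [pow_two, hπ gb_mul_self]⟩)
    hab (hbd.map π)
  rw [← Set.image_singleton, ← Set.image_insert_eq, ← Set.image_insert_eq,
    ← MonoidHom.map_closure, closure_ga_gb_gd,
    Subgroup.map_top_of_surjective _ (QuotientGroup.mk'_surjective K)] at hfin
  exact Set.finite_univ_iff.1 hfin

end Grig

/-- **Proposition 2.3 (the subgroup `K` trick).** There are a finite set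
`𝓕 ⊆ Γ/K × Γ/K` and a map `ω : 𝓕 → Γ/K` (formalized as a total map, whose values
matter only on `𝓕`) such that: (i) a pair `(g₀,g₁) ∈ Γ × Γ` belongs to the image of `ψ`
if and only if `(π_K(g₀), π_K(g₁)) ∈ 𝓕`; (ii) whenever `(π_K(g₀), π_K(g₁)) ∈ 𝓕`,
every `g ∈ St_Γ(1)` with `ψ(g) = (g₀,g₁)` satisfies `π_K(g) = ω(π_K(g₀), π_K(g₁))`. -/
theorem Grig.psi_image_via_K :
    ∃ (FF : Set ((Grigorchuk ⧸ K) × (Grigorchuk ⧸ K)))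
      (ω : (Grigorchuk ⧸ K) × (Grigorchuk ⧸ K) → Grigorchuk ⧸ K),
      FF.Finite ∧
      (∀ g0 g1 : Grigorchuk,
        (∃ g ∈ St1, psiG false g = g0 ∧ psiG true g = g1) ↔
          ((QuotientGroup.mk' K) g0, (QuotientGroup.mk' K) g1) ∈ FF) ∧
      (∀ g0 g1 : Grigorchuk,
        ((QuotientGroup.mk' K) g0, (QuotientGroup.mk' K) g1) ∈ FF →
        ∀ g ∈ St1, psiG false g = g0 → psiG true g = g1 →
          (QuotientGroup.mk' K) g = ω ((QuotientGroup.mk' K) g0, (QuotientGroup.mk' K) g1)) := by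
  let q := (QuotientGroup.mk' K).prodMap (QuotientGroup.mk' K)
  let r := (QuotientGroup.mk' K).comp St1.subtype
  have hker : q.ker ≤ r.ker.map psi := by
    rw [MonoidHom.ker_prodMap, QuotientGroup.ker_mk', ← MonoidHom.comap_ker, QuotientGroup.ker_mk']
    exact prod_K_le_map_psi
  refine ⟨(q.comp psi).range, fun p => r (Function.invFun (q.comp psi) p),
    Set.toFinite _, fun g0 g1 => ?_, ?_⟩
  · change _ ↔ q (g0, g1) ∈ (q.comp psi).range
    rw [← MonoidHom.mem_range_iff_of_ker_le_range (hker.trans (Subgroup.map_le_range _ _))]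
    exact ⟨fun ⟨g, hg, h0, h1⟩ => ⟨⟨g, hg⟩, by rw [psi_apply, h0, h1]⟩,
      fun ⟨g, hg⟩ => ⟨g, g.2, congrArg Prod.fst hg, congrArg Prod.snd hg⟩⟩
  · rintro _ _ - g hg rfl rfl
    have hinv := Function.invFun_eq (f := q.comp psi) ⟨⟨g, hg⟩, rfl⟩
    exact (MonoidHom.eq_iff _).2 (MonoidHom.ker_comp_le_of_injective psi_injective hker
      ((MonoidHom.eq_iff _).1 hinv.symm))
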